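/- arXiv:1701.06404 — 4 statements merged into one kernel-verified Lean document; each statement's English description precedes it below -/
import Mathlib

section
/- A finite simple connected graph G is sequentially distance preserving if and only if G admits a weakly 4-simplicial ordering, i.e., an ordering v_1, …, v_n of V(G) such that for every i, the vertex v_i is weakly 4-simplicial in the subgraph induced on {v_i, …, v_n}. -/
open SimpleGraph

/-- `G[A]` is an isometric subgraph of `G`: it is connected and distances
within `G[A]` agree with distances in `G`. -/
def IsIsomSub {V : Type*} (G : SimpleGraph V) (A : Set V) : Prop :=
  (G.induce A).Connected ∧
    ∀ u v : A, (G.induce A).dist u v = G.dist (u : V) (v : V)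

/-- `G` is sequentially distance preserving: there is an ordering
`v_1, …, v_n` of the vertices (given by `e`, where `v_{j+1} = e j`) such that
for every `i ≥ 1` deleting the first `i` vertices leaves an isometric
subgraph. -/
def SeqDistPres {V : Type*} [Fintype V] (G : SimpleGraph V) : Prop :=
  ∃ e : Fin (Fintype.card V) ≃ V,
    ∀ i : ℕ, 1 ≤ i → i < Fintype.card V →
      IsIsomSub G {v : V | ∃ j : Fin (Fintype.card V), i ≤ (j : ℕ) ∧ e j = v}

/-- A vertex `v` of a graph `H` is weakly 4-simplicial if every pair of
neighbours of `v` in `H` is at distance at most `2` in `H − v` (i.e. they are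
joined in `H − v` by a walk of length at most `2`). -/
def Weakly4Simplicial {W : Type*} (H : SimpleGraph W) (v : W) : Prop :=
  ∀ (x y : W) (hx : H.Adj v x) (hy : H.Adj v y),
    ∃ w : (H.induce {u : W | u ≠ v}).Walk ⟨x, hx.ne'⟩ ⟨y, hy.ne'⟩, w.length ≤ 2

/-! Let `A` be an isometric vertex set and `v ∈ A`. Then `A \ {v}` is again isometric (or empty)
exactly when `v` is weakly 4-simplicial in `G[A]`. Indeed, a shortest walk of `G[A]` that passes
through `v` does so along `a - v - b` with `a, b` neighbours of `v`, and weak 4-simpliciality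
replaces this detour by a walk of length at most `2` avoiding `v`. Conversely, two neighbours of `v`
are at distance at most `2` in `G`, and this distance must be realised inside `A \ {v}`. Both
directions of the theorem then follow by induction along the ordering. -/

section

variable {V : Type*} {G : SimpleGraph V} {A : Set V} {v : V}

theorem SimpleGraph.Reachable.dist_map_le {W : Type*} {H : SimpleGraph W} (f : G →g H) {x y : V}
    (h : G.Reachable x y) : H.dist (f x) (f y) ≤ G.dist x y := by
  obtain ⟨p, hp⟩ := h.exists_walk_length_eq_dist
  simpa [hp] using H.dist_le (p.map f)

theorem isIsomSub_of_exists_walk_le (hA : A.Nonempty)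
    (h : ∀ x y : A, ∃ w : (G.induce A).Walk x y, w.length ≤ G.dist x y) : IsIsomSub G A := by
  have hpre : (G.induce A).Preconnected := fun x y => (h x y).elim fun w _ => w.reachable
  have := hA.to_subtype
  refine ⟨⟨hpre⟩, fun x y => le_antisymm ?_ ((hpre x y).dist_map_le (Embedding.induce A).toHom)⟩
  obtain ⟨w, hw⟩ := h x y
  exact (dist_le w).trans hw

theorem isIsomSub_univ (hG : G.Connected) : IsIsomSub G Set.univ := by
  have := hG.nonempty
  refine isIsomSub_of_exists_walk_le Set.univ_nonempty fun x y => ?_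
  obtain ⟨p, hp⟩ := hG.exists_walk_length_eq_dist x y
  exact ⟨p.map G.induceUnivIso.symm.toHom, ((Walk.length_map _ _).trans hp).le⟩

def induceDiffSingletonIso (G : SimpleGraph V) (hv : v ∈ A) :
    (G.induce A).induce {u | u ≠ ⟨v, hv⟩} ≃g G.induce (A \ {v}) where
  toFun x := ⟨x.1.1, x.1.2, fun h => x.2 (Subtype.ext h)⟩
  invFun y := ⟨⟨y.1, y.2.1⟩, fun h => y.2.2 (congrArg Subtype.val h)⟩
  left_inv _ := rfl
  right_inv _ := rfl
  map_rel_iff' := Iff.rfl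

theorem Weakly4Simplicial.exists_walk_avoiding {W : Type*} {H : SimpleGraph W} {v : W}
    (hv : Weakly4Simplicial H v) {x y : W} (w : H.Walk x y) (hx : x ≠ v) (hy : y ≠ v) :
    ∃ w' : (H.induce {u | u ≠ v}).Walk ⟨x, hx⟩ ⟨y, hy⟩, w'.length ≤ w.length := by
  -- The induction also covers walks starting at `v`: those can be restarted at any neighbour of
  -- `v` at the cost of one extra step, which pays for the detour around `v`.
  suffices key : ∀ {a b : W} (p : H.Walk a b) (hb : b ≠ v),
      (∀ ha : a ≠ v, ∃ p' : (H.induce {u | u ≠ v}).Walk ⟨a, ha⟩ ⟨b, hb⟩,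
        p'.length ≤ p.length) ∧
      (a = v → ∀ c (hc : H.Adj v c), ∃ p' : (H.induce {u | u ≠ v}).Walk ⟨c, hc.ne'⟩ ⟨b, hb⟩,
        p'.length ≤ p.length + 1) from (key w hy).1 hx
  intro a b p hb
  induction p with
  | nil => exact ⟨fun _ => ⟨.nil, le_rfl⟩, fun h => absurd h hb⟩
  | @cons a c b hac p ih =>
    refine ⟨fun ha => ?_, ?_⟩
    · by_cases hc : c = v
      · subst hc
        obtain ⟨p', hp'⟩ := (ih hb).2 rfl a hac.symm
        exact ⟨p', by simpa using hp'⟩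
      · obtain ⟨p', hp'⟩ := (ih hb).1 hc
        exact ⟨.cons (show (H.induce _).Adj ⟨a, ha⟩ ⟨c, hc⟩ from hac) p', by simpa using hp'⟩
    · rintro rfl d hd
      obtain ⟨q, hq⟩ := hv d c hd hac
      obtain ⟨p', hp'⟩ := (ih hb).1 hac.ne'
      exact ⟨q.append p', by simp only [Walk.length_append, Walk.length_cons]; omega⟩

theorem IsIsomSub.diff_singleton (hA : IsIsomSub G A) (hv : v ∈ A)
    (h4 : Weakly4Simplicial (G.induce A) ⟨v, hv⟩) (hne : (A \ {v}).Nonempty) :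
    IsIsomSub G (A \ {v}) := by
  refine isIsomSub_of_exists_walk_le hne fun x y => ?_
  have hx : (⟨x, x.2.1⟩ : A) ≠ ⟨v, hv⟩ := fun h => x.2.2 (congrArg Subtype.val h)
  have hy : (⟨y, y.2.1⟩ : A) ≠ ⟨v, hv⟩ := fun h => y.2.2 (congrArg Subtype.val h)
  obtain ⟨p, hp⟩ := hA.1.exists_walk_length_eq_dist ⟨x, x.2.1⟩ ⟨y, y.2.1⟩
  obtain ⟨q, hq⟩ := h4.exists_walk_avoiding p hx hy
  refine ⟨q.map (induceDiffSingletonIso G hv).toHom, (Walk.length_map _ _).trans_le ?_⟩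
  exact hq.trans (hp.trans (hA.2 _ _)).le

theorem weakly4Simplicial_induce_of_isIsomSub_diff (hv : v ∈ A)
    (h : (A \ {v}).Nonempty → IsIsomSub G (A \ {v})) :
    Weakly4Simplicial (G.induce A) ⟨v, hv⟩ := by
  intro x y hx hy
  have hxA : x.1 ∈ A \ {v} := ⟨x.2, (show G.Adj v x from hx).ne'⟩
  have hyA : y.1 ∈ A \ {v} := ⟨y.2, (show G.Adj v y from hy).ne'⟩
  have hAv := h ⟨x, hxA⟩
  obtain ⟨p, hp⟩ := hAv.1.exists_walk_length_eq_dist ⟨x, hxA⟩ ⟨y, hyA⟩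
  refine ⟨p.map (induceDiffSingletonIso G hv).symm.toHom, (Walk.length_map _ _).trans_le ?_⟩
  rw [hp, hAv.2]
  exact G.dist_le (.cons (show G.Adj x v from hx.symm) (.cons hy .nil))

section Ordering

variable {n : ℕ} (e : Fin n ≃ V)

def vertexSuffix (i : ℕ) : Set V := {v | ∃ j : Fin n, i ≤ (j : ℕ) ∧ e j = v}

theorem vertexSuffix_zero : vertexSuffix e 0 = Set.univ :=
  Set.eq_univ_of_forall fun v => ⟨e.symm v, Nat.zero_le _, e.apply_symm_apply v⟩

theorem mem_vertexSuffix_self (i : Fin n) : e i ∈ vertexSuffix e i := ⟨i, le_rfl, rfl⟩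

theorem vertexSuffix_nonempty_iff {i : ℕ} : (vertexSuffix e i).Nonempty ↔ i < n :=
  ⟨fun ⟨_, j, hj, _⟩ => hj.trans_lt j.2, fun hi => ⟨_, mem_vertexSuffix_self e ⟨i, hi⟩⟩⟩

theorem vertexSuffix_diff_singleton (i : Fin n) :
    vertexSuffix e i \ {e i} = vertexSuffix e (i + 1) := by
  ext w
  simp only [vertexSuffix, Set.mem_sdiff, Set.mem_ofPred_eq, Set.mem_singleton_iff]
  constructor
  · rintro ⟨⟨j, hij, rfl⟩, hj⟩
    exact ⟨j, Nat.lt_of_le_of_ne hij fun h => hj (congrArg e (Fin.ext h.symm)), rfl⟩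
  · rintro ⟨j, hij, rfl⟩
    exact ⟨⟨j, by omega, rfl⟩, fun h => by have := congrArg Fin.val (e.injective h); omega⟩

theorem isIsomSub_vertexSuffix (hG : G.Connected)
    (he : ∀ i : Fin n,
      Weakly4Simplicial (G.induce (vertexSuffix e i)) ⟨e i, mem_vertexSuffix_self e i⟩)
    (i : ℕ) (hi : i < n) : IsIsomSub G (vertexSuffix e i) := by
  induction i with
  | zero => exact vertexSuffix_zero e ▸ isIsomSub_univ hG
  | succ i ih =>
    have hdiff : vertexSuffix e i \ {e ⟨i, _⟩} = vertexSuffix e (i + 1) :=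
      vertexSuffix_diff_singleton e ⟨i, by omega⟩
    rw [← hdiff]
    exact (ih (by omega)).diff_singleton _ (he ⟨i, by omega⟩)
      (hdiff ▸ (vertexSuffix_nonempty_iff e).2 hi)

end Ordering

end

/-- A finite simple connected graph is sequentially distance preserving if and
only if it admits a weakly 4-simplicial ordering, i.e. an ordering
`v_1, …, v_n` of the vertices such that every `v_i` is weakly 4-simplicial in
the subgraph induced on `{v_i, …, v_n}`. -/
theorem sdp_iff_weakly_four_simplicial_ordering {V : Type*} [Fintype V]
    (G : SimpleGraph V) (hG : G.Connected) :
    SeqDistPres G ↔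
      ∃ e : Fin (Fintype.card V) ≃ V,
        ∀ i : Fin (Fintype.card V),
          Weakly4Simplicial
            (G.induce {v : V | ∃ j : Fin (Fintype.card V), (i : ℕ) ≤ (j : ℕ) ∧ e j = v})
            ⟨e i, ⟨i, le_refl _, rfl⟩⟩ := by
  constructor
  · rintro ⟨e, he⟩
    refine ⟨e, fun i =>
      weakly4Simplicial_induce_of_isIsomSub_diff (A := vertexSuffix e i) _ fun hne => ?_⟩
    rw [vertexSuffix_diff_singleton e i] at hne ⊢
    exact he _ (Nat.le_add_left 1 i) ((vertexSuffix_nonempty_iff e).1 hne)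
  · rintro ⟨e, he⟩
    exact ⟨e, fun i _ hi => isIsomSub_vertexSuffix e hG he i hi⟩
end

section
/- Let G and H be finite simple connected graphs whose vertex sets intersect in exactly one vertex x, and let G +_x H denote their union. Then dp(G +_x H) = {a + b − 1 : a ∈ dp^x(G), b ∈ dp^x(H)} ∪ dp_x(G) ∪ dp_x(H), where for a graph K and vertex x, dp^x(K) denotes the set of cardinalities |A| over all A ⊆ V(K) with x ∈ A such that K[A] is an isometric subgraph of K, dp_x(K) denotes the set of cardinalities |A| over all nonempty A ⊆ V(K) with x ∉ A such that K[A] is an isometric subgraph of K, and dp(K) denotes the set of cardinalities |A| over all nonempty A ⊆ V(K) such that K[A] is an isometric subgraph of K. -/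
/-!
A walk leaves or enters one side of `G +_x H` only through `x`, so a walk between two vertices of
one side can be shortcut to stay in that side, and the distance between vertices on opposite
sides is the sum of their distances to `x`. Hence an isometric subgraph containing `x` is exactly
the union of an isometric subgraph of `G` and one of `H` through `x`, which meet only in `x`;
an isometric subgraph avoiding `x` is connected without `x`, so it lies in one side, where
distances are those of `G +_x H`.
-/

open SimpleGraph

/-- `dp(K)`: the set of cardinalities of (nonempty) isometric subgraphs of `K`. -/
def dpAll {V : Type*} (K : SimpleGraph V) : Set ℕ :=
  {n : ℕ | ∃ A : Set V, A.Nonempty ∧ A.ncard = n ∧ IsIsomSub K A}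

/-- `dp^x(K)`: the set of cardinalities of isometric subgraphs of `K`
containing the vertex `x`. -/
def dpIn {V : Type*} (K : SimpleGraph V) (x : V) : Set ℕ :=
  {n : ℕ | ∃ A : Set V, x ∈ A ∧ A.ncard = n ∧ IsIsomSub K A}

/-- `dp_x(K)`: the set of cardinalities of nonempty isometric subgraphs of `K`
avoiding the vertex `x`. -/
def dpOut {V : Type*} (K : SimpleGraph V) (x : V) : Set ℕ :=
  {n : ℕ | ∃ A : Set V, A.Nonempty ∧ x ∉ A ∧ A.ncard = n ∧ IsIsomSub K A}

namespace SimpleGraph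

variable {V W : Type*}

lemma Reachable.dist_map_le_s8 {G : SimpleGraph V} {G' : SimpleGraph W} (f : G →g G')
    {u v : V} (h : G.Reachable u v) : G'.dist (f u) (f v) ≤ G.dist u v := by
  obtain ⟨p, hp⟩ := h.exists_walk_length_eq_dist
  calc G'.dist (f u) (f v) ≤ (p.map f).length := dist_le _
    _ = G.dist u v := by rw [Walk.length_map, hp]

lemma Walk.length_induce {G : SimpleGraph V} {s : Set V} {u v : V} (w : G.Walk u v)
    (hw : ∀ y ∈ w.support, y ∈ s) : (w.induce s hw).length = w.length :=
  (Walk.length_map _ _).symm.trans (congrArg Walk.length (w.map_induce hw))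

end SimpleGraph

theorem Set.ncard_union_add_one_of_inter_eq_singleton {α : Type*} {A B : Set α} {x : α}
    (hA : A.Finite) (hB : B.Finite) (hAB : A ∩ B = {x}) :
    (A ∪ B).ncard + 1 = A.ncard + B.ncard := by
  rw [← Set.ncard_union_add_ncard_inter A B hA hB, hAB, Set.ncard_singleton]

section

variable {V : Type*} {K : SimpleGraph V}

theorem isIsomSub_iff_exists_walk {C : Set V} :
    IsIsomSub K C ↔ C.Nonempty ∧ ∀ u ∈ C, ∀ v ∈ C,
      ∃ w : K.Walk u v, (∀ y ∈ w.support, y ∈ C) ∧ w.length ≤ K.dist u v := by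
  constructor
  · rintro ⟨hconn, hdist⟩
    refine ⟨Set.nonempty_coe_sort.mp hconn.nonempty, fun u hu v hv => ?_⟩
    obtain ⟨p, hp⟩ := hconn.exists_walk_length_eq_dist ⟨u, hu⟩ ⟨v, hv⟩
    refine ⟨p.map (Embedding.induce C).toHom, fun y hy => ?_, ?_⟩
    · obtain ⟨z, -, rfl⟩ := List.mem_map.mp ((Walk.support_map _ p) ▸ hy)
      exact z.2
    · exact ((Walk.length_map _ p).trans (hp.trans (hdist _ _))).le
  · rintro ⟨⟨x, hx⟩, hwalk⟩
    have hlift : ∀ u v : C, ∃ p : (K.induce C).Walk u v, p.length ≤ K.dist u v := by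
      intro u v
      obtain ⟨w, hwC, hw⟩ := hwalk u u.2 v v.2
      exact ⟨w.induce C hwC, (w.length_induce hwC).trans_le hw⟩
    have hconn : (K.induce C).Connected :=
      (connected_iff _).mpr ⟨fun u v => ⟨(hlift u v).choose⟩, ⟨⟨x, hx⟩⟩⟩
    refine ⟨hconn, fun u v => le_antisymm ?_ ?_⟩
    · obtain ⟨p, hp⟩ := hlift u v
      exact (dist_le p).trans hp
    · exact (hconn.preconnected u v).dist_map_le_s8 (Embedding.induce C).toHom

theorem isIsomSub_induce_iff {s : Set V}
    (hs : ∀ u v : s, (K.induce s).dist u v = K.dist u v) {B : Set s} :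
    IsIsomSub (K.induce s) B ↔ IsIsomSub K (Subtype.val '' B) := by
  simp only [isIsomSub_iff_exists_walk, Set.image_nonempty, Set.forall_mem_image, hs]
  refine and_congr_right fun _ => forall₂_congr fun u _ => forall₂_congr fun v _ => ?_
  constructor
  · rintro ⟨w, hwB, hw⟩
    refine ⟨w.map (Embedding.induce s).toHom, fun y hy => ?_, (Walk.length_map _ w).trans_le hw⟩
    obtain ⟨z, hz, rfl⟩ := List.mem_map.mp ((Walk.support_map _ w) ▸ hy)
    exact Set.mem_image_of_mem _ (hwB z hz)
  · rintro ⟨w, hwB, hw⟩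
    have hws : ∀ y ∈ w.support, y ∈ s := fun y hy => Subtype.coe_image_subset s B (hwB y hy)
    refine ⟨w.induce s hws, ?_, by rwa [Walk.length_induce]⟩
    intro y hy
    simp only [Walk.support_induce, List.mem_attachWith] at hy
    exact Subtype.val_injective.mem_set_image.mp (hwB y hy)

theorem dpIn_induce {s : Set V} (hs : ∀ u v : s, (K.induce s).dist u v = K.dist u v)
    {x : V} (hx : x ∈ s) :
    dpIn (K.induce s) ⟨x, hx⟩ = {n | ∃ A ⊆ s, x ∈ A ∧ A.ncard = n ∧ IsIsomSub K A} := by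
  ext n
  simp only [dpIn, Set.mem_ofPred_eq, ← Subtype.exists_set_subtype (p := fun A =>
    x ∈ A ∧ A.ncard = n ∧ IsIsomSub K A), Set.ncard_image_of_injective _ Subtype.val_injective,
    isIsomSub_induce_iff hs]
  exact exists_congr fun B => and_congr_left' Subtype.val_injective.mem_set_image.symm

theorem dpOut_induce {s : Set V} (hs : ∀ u v : s, (K.induce s).dist u v = K.dist u v)
    {x : V} (hx : x ∈ s) :
    dpOut (K.induce s) ⟨x, hx⟩ =
      {n | ∃ A ⊆ s, A.Nonempty ∧ x ∉ A ∧ A.ncard = n ∧ IsIsomSub K A} := by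
  ext n
  simp only [dpOut, Set.mem_ofPred_eq, ← Subtype.exists_set_subtype (p := fun A =>
    A.Nonempty ∧ x ∉ A ∧ A.ncard = n ∧ IsIsomSub K A), Set.image_nonempty,
    Set.ncard_image_of_injective _ Subtype.val_injective, isIsomSub_induce_iff hs]
  exact exists_congr fun B => and_congr_right' <|
    and_congr_left' (not_congr Subtype.val_injective.mem_set_image.symm)

/-- `K` is `K[s] +_x K[t]`, up to isolated vertices outside `s ∪ t`. -/
structure IsSplitAt (K : SimpleGraph V) (s t : Set V) (x : V) : Prop where
  inter_eq : s ∩ t = {x}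
  adj_mem : ∀ u v, K.Adj u v → (u ∈ s ∧ v ∈ s) ∨ (u ∈ t ∧ v ∈ t)

namespace IsSplitAt

variable {s t : Set V} {x : V} (h : IsSplitAt K s t x)
include h

theorem symm : IsSplitAt K t s x :=
  ⟨by rw [Set.inter_comm, h.inter_eq], fun u v huv => (h.adj_mem u v huv).symm⟩

theorem mem_left : x ∈ s := (h.inter_eq.ge (Set.mem_singleton x)).1

theorem eq_of_mem_of_mem {y : V} (hs : y ∈ s) (ht : y ∈ t) : y = x := by
  have hy : y ∈ s ∩ t := ⟨hs, ht⟩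
  rwa [h.inter_eq] at hy

theorem eq_of_adj {u v : V} (huv : K.Adj u v) (hu : u ∈ s) (hv : v ∉ s) : u = x := by
  rcases h.adj_mem u v huv with ⟨-, hv'⟩ | ⟨hu', -⟩
  · exact absurd hv' hv
  · exact h.eq_of_mem_of_mem hu hu'

theorem mem_support_of_walk {u v : V} (w : K.Walk u v) (hu : u ∈ s) (hv : v ∉ s) :
    x ∈ w.support := by
  induction w with
  | nil => exact absurd hu hv
  | @cons u b v huv p ih =>
    by_cases hb : b ∈ s
    · exact List.mem_cons_of_mem _ (ih hb hv)
    · rw [Walk.support_cons, h.eq_of_adj huv hu hb]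
      exact List.mem_cons_self

/-- The second half, for walks entering `s` through `x`, is what makes the induction go through. -/
theorem exists_walk_inside_of_end_mem {u v : V} (w : K.Walk u v) (hv : v ∈ s) :
    (u ∈ s → ∃ w' : K.Walk u v,
      (∀ y ∈ w'.support, y ∈ s ∧ y ∈ w.support) ∧ w'.length ≤ w.length) ∧
    (u ∉ s → ∃ w' : K.Walk x v,
      (∀ y ∈ w'.support, y ∈ s ∧ y ∈ w.support) ∧ w'.length < w.length) := by
  induction w with
  | nil => exact ⟨fun _ => ⟨.nil, by simpa using hv, le_rfl⟩, fun hu => absurd hv hu⟩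
  | @cons u b v huv p ih =>
    have hsub : ∀ y ∈ p.support, y ∈ (Walk.cons huv p).support :=
      fun y hy => List.mem_cons_of_mem _ hy
    obtain ⟨ih_in, ih_out⟩ := ih hv
    by_cases hb : b ∈ s
    · obtain ⟨q, hq, hql⟩ := ih_in hb
      refine ⟨fun hu => ⟨.cons huv q, fun y hy => ?_, by simpa using hql⟩, fun hu => ?_⟩
      · rcases List.mem_cons.mp hy with rfl | hy
        · exact ⟨hu, Walk.start_mem_support _⟩
        · exact ⟨(hq y hy).1, hsub y (hq y hy).2⟩
      · obtain rfl := h.eq_of_adj huv.symm hb hu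
        exact ⟨q, fun y hy => ⟨(hq y hy).1, hsub y (hq y hy).2⟩, by simp; omega⟩
    · obtain ⟨q, hq, hql⟩ := ih_out hb
      have hq' : ∀ y ∈ q.support, y ∈ s ∧ y ∈ (Walk.cons huv p).support :=
        fun y hy => ⟨(hq y hy).1, hsub y (hq y hy).2⟩
      refine ⟨fun hu => ?_, fun _ => ⟨q, hq', by simp; omega⟩⟩
      obtain rfl := h.eq_of_adj huv hu hb
      exact ⟨q, hq', by simp; omega⟩

theorem exists_walk_inside {u v : V} (w : K.Walk u v) (hu : u ∈ s) (hv : v ∈ s) :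
    ∃ w' : K.Walk u v, (∀ y ∈ w'.support, y ∈ s ∧ y ∈ w.support) ∧ w'.length ≤ w.length :=
  (h.exists_walk_inside_of_end_mem w hv).1 hu

theorem dist_induce (u v : s) : (K.induce s).dist u v = K.dist u v := by
  by_cases hr : K.Reachable u v
  · obtain ⟨w, hw⟩ := hr.exists_walk_length_eq_dist
    obtain ⟨w', hw', hl⟩ := h.exists_walk_inside w u.2 v.2
    let p : (K.induce s).Walk u v := w'.induce s fun y hy => (hw' y hy).1
    have hp : p.length ≤ K.dist u v := (w'.length_induce _).trans_le (hl.trans hw.le)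
    exact le_antisymm ((dist_le p).trans hp) (Reachable.dist_map_le_s8 (Embedding.induce s).toHom ⟨p⟩)
  · rw [dist_eq_zero_of_not_reachable hr, dist_eq_zero_of_not_reachable]
    exact fun hr' => hr (hr'.map (Embedding.induce s).toHom)

theorem dist_eq_add {u v : V} (hu : u ∈ s) (hv : v ∈ t) (huv : K.Reachable u v) :
    K.dist u v = K.dist u x + K.dist x v := by
  by_cases hvs : v ∈ s
  · obtain rfl := h.eq_of_mem_of_mem hvs hv
    rw [dist_self, add_zero]
  obtain ⟨w, hw⟩ := huv.exists_walk_length_eq_dist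
  obtain ⟨p, q, rfl⟩ := Walk.mem_support_iff_exists_append.mp (h.mem_support_of_walk w hu hvs)
  refine le_antisymm (Reachable.dist_triangle_left ⟨p⟩ v) ?_
  rw [← hw, Walk.length_append]
  exact add_le_add (dist_le p) (dist_le q)

theorem isIsomSub_inter {A : Set V} (hA : IsIsomSub K A) (hxA : x ∈ A) :
    IsIsomSub K (A ∩ s) := by
  rw [isIsomSub_iff_exists_walk] at hA ⊢
  refine ⟨⟨x, hxA, h.mem_left⟩, fun u hu v hv => ?_⟩
  obtain ⟨w, hwA, hw⟩ := hA.2 u hu.1 v hv.1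
  obtain ⟨w', hw', hl⟩ := h.exists_walk_inside w hu.2 hv.2
  exact ⟨w', fun y hy => ⟨hwA y (hw' y hy).2, (hw' y hy).1⟩, hl.trans hw⟩

theorem isIsomSub_union {A B : Set V} (hA : IsIsomSub K A) (hB : IsIsomSub K B)
    (hAs : A ⊆ s) (hBt : B ⊆ t) (hxA : x ∈ A) (hxB : x ∈ B) : IsIsomSub K (A ∪ B) := by
  rw [isIsomSub_iff_exists_walk] at hA hB ⊢
  have across : ∀ u ∈ A, ∀ v ∈ B, ∃ w : K.Walk u v,
      (∀ y ∈ w.support, y ∈ A ∪ B) ∧ w.length ≤ K.dist u v := by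
    intro u hu v hv
    obtain ⟨p, hpA, hp⟩ := hA.2 u hu x hxA
    obtain ⟨q, hqB, hq⟩ := hB.2 x hxB v hv
    refine ⟨p.append q, fun y hy => ?_, ?_⟩
    · exact (Walk.mem_support_append_iff p q).mp hy |>.imp (hpA y) (hqB y)
    · rw [Walk.length_append, h.dist_eq_add (hAs hu) (hBt hv) ⟨p.append q⟩]
      exact add_le_add hp hq
  refine ⟨⟨x, .inl hxA⟩, ?_⟩
  rintro u (hu | hu) v (hv | hv)
  · obtain ⟨w, hw, hl⟩ := hA.2 u hu v hv
    exact ⟨w, fun y hy => .inl (hw y hy), hl⟩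
  · exact across u hu v hv
  · obtain ⟨w, hw, hl⟩ := across v hv u hu
    exact ⟨w.reverse, by simpa using hw, by rwa [Walk.length_reverse, dist_comm]⟩
  · obtain ⟨w, hw, hl⟩ := hB.2 u hu v hv
    exact ⟨w, fun y hy => .inr (hw y hy), hl⟩

theorem subset_or_subset (hst : s ∪ t = Set.univ) {A : Set V} (hA : (K.induce A).Connected)
    (hxA : x ∉ A) : A ⊆ s ∨ A ⊆ t := by
  by_contra! hcon
  obtain ⟨⟨u, huA, hus⟩, ⟨v, hvA, hvt⟩⟩ := And.imp Set.not_subset.mp Set.not_subset.mp hcon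
  have hvs : v ∈ s := (hst.symm ▸ Set.mem_univ v : v ∈ s ∪ t).resolve_right hvt
  obtain ⟨p⟩ := hA.preconnected ⟨v, hvA⟩ ⟨u, huA⟩
  obtain ⟨y, -, hyx⟩ := List.mem_map.mp <|
    (Walk.support_map _ p) ▸ h.mem_support_of_walk (p.map (Embedding.induce A).toHom) hvs hus
  exact hxA (hyx ▸ y.2)

theorem ncard_inter_add_ncard_inter (hst : s ∪ t = Set.univ) {A : Set V} (hA : A.Finite)
    (hxA : x ∈ A) : (A ∩ s).ncard + (A ∩ t).ncard = A.ncard + 1 := by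
  have hcard := Set.ncard_union_add_one_of_inter_eq_singleton (hA.inter_of_left s)
    (hA.inter_of_left t) (by rw [← Set.inter_inter_distrib_left, h.inter_eq,
      Set.inter_eq_right.mpr (Set.singleton_subset_iff.mpr hxA)])
  rw [← Set.inter_union_distrib_left, hst, Set.inter_univ] at hcard
  omega

theorem ncard_union {A B : Set V} (hA : A.Finite) (hB : B.Finite) (hAs : A ⊆ s) (hBt : B ⊆ t)
    (hxA : x ∈ A) (hxB : x ∈ B) : (A ∪ B).ncard + 1 = A.ncard + B.ncard :=
  Set.ncard_union_add_one_of_inter_eq_singleton hA hB <| subset_antisymm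
    (h.inter_eq ▸ Set.inter_subset_inter hAs hBt) (Set.singleton_subset_iff.mpr ⟨hxA, hxB⟩)

end IsSplitAt

end

theorem dp_of_union_general {V : Type*} [Fintype V] (K : SimpleGraph V)
    (sG sH : Set V) (x : V) (hxG : x ∈ sG) (hxH : x ∈ sH)
    (hcap : sG ∩ sH = {x}) (hcup : sG ∪ sH = Set.univ)
    (hedge : ∀ u v : V, K.Adj u v → (u ∈ sG ∧ v ∈ sG) ∨ (u ∈ sH ∧ v ∈ sH)) :
    dpAll K =
      {n : ℕ | ∃ a ∈ dpIn (K.induce sG) ⟨x, hxG⟩,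
        ∃ b ∈ dpIn (K.induce sH) ⟨x, hxH⟩, n = a + b - 1}
      ∪ dpOut (K.induce sG) ⟨x, hxG⟩ ∪ dpOut (K.induce sH) ⟨x, hxH⟩ := by
  have h : IsSplitAt K sG sH x := ⟨hcap, hedge⟩
  rw [dpIn_induce h.dist_induce, dpIn_induce h.symm.dist_induce, dpOut_induce h.dist_induce,
    dpOut_induce h.symm.dist_induce]
  ext n
  simp only [dpAll, Set.mem_union, Set.mem_ofPred_eq]
  constructor
  · rintro ⟨A, hne, rfl, hA⟩
    by_cases hxA : x ∈ A
    · have hcard := h.ncard_inter_add_ncard_inter hcup A.toFinite hxA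
      exact .inl <| .inl
        ⟨_, ⟨A ∩ sG, Set.inter_subset_right, ⟨hxA, hxG⟩, rfl, h.isIsomSub_inter hA hxA⟩,
          _, ⟨A ∩ sH, Set.inter_subset_right, ⟨hxA, hxH⟩, rfl, h.symm.isIsomSub_inter hA hxA⟩,
          by omega⟩
    · rcases h.subset_or_subset hcup hA.1 hxA with hAG | hAH
      · exact .inl <| .inr ⟨A, hAG, hne, hxA, rfl, hA⟩
      · exact .inr ⟨A, hAH, hne, hxA, rfl, hA⟩
  · rintro ((⟨_, ⟨A, hAG, hxA, rfl, hA⟩, _, ⟨B, hBH, hxB, rfl, hB⟩, rfl⟩ |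
      ⟨A, -, hne, -, rfl, hA⟩) | ⟨A, -, hne, -, rfl, hA⟩)
    · have hcard := h.ncard_union A.toFinite B.toFinite hAG hBH hxA hxB
      exact ⟨A ∪ B, ⟨x, .inl hxA⟩, by omega, h.isIsomSub_union hA hB hAG hBH hxA hxB⟩
    · exact ⟨A, hne, rfl, hA⟩
    · exact ⟨A, hne, rfl, hA⟩

/-- Let `K = G +_x H` be the union of two finite simple connected graphs
`G = K[sG]` and `H = K[sH]` whose vertex sets intersect in exactly the
vertex `x`.  Then
`dp(G +_x H) = (dp^x(G) + dp^x(H) + {-1}) ∪ dp_x(G) ∪ dp_x(H)`. -/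
theorem dp_of_union {V : Type*} [Fintype V] (K : SimpleGraph V)
    (sG sH : Set V) (x : V) (hxG : x ∈ sG) (hxH : x ∈ sH)
    (hcap : sG ∩ sH = {x}) (hcup : sG ∪ sH = Set.univ)
    (hedge : ∀ u v : V, K.Adj u v → (u ∈ sG ∧ v ∈ sG) ∨ (u ∈ sH ∧ v ∈ sH))
    (hGconn : (K.induce sG).Connected) (hHconn : (K.induce sH).Connected) :
    dpAll K =
      {n : ℕ | ∃ a ∈ dpIn (K.induce sG) ⟨x, hxG⟩,
        ∃ b ∈ dpIn (K.induce sH) ⟨x, hxH⟩, n = a + b - 1}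
      ∪ dpOut (K.induce sG) ⟨x, hxG⟩ ∪ dpOut (K.induce sH) ⟨x, hxH⟩ :=
  dp_of_union_general K sG sH x hxG hxH hcap hcup hedge
end

section
/- Let G and H be finite simple connected graphs whose vertex sets intersect in exactly one vertex x, and let G +_x H denote their union. Then the set of cardinalities of isometric subgraphs of G +_x H whose vertex set avoids x equals dp_x(G) ∪ dp_x(H), where dp_x(K) denotes the set of cardinalities |A| over all nonempty A ⊆ V(K) with x ∉ A such that K[A] is an isometric subgraph of K. -/
open SimpleGraph

/-
If every edge leaving a vertex set `s` leaves it at `x ∈ s`, then collapsing all vertices outside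
`s` onto `x` maps each edge of `K` to an edge of `K[s]` or to a single vertex, so it does not
increase distances and `K[s]` is an isometric subgraph of `K`. Hence for `A ⊆ s`, being isometric in
`K[s]` and in `K` are the same. Conversely, a connected set avoiding the cut vertex `x` cannot meet
both sides, so it lies inside `V(G)` or inside `V(H)`.
-/

namespace SimpleGraph

variable {V W : Type*} {G : SimpleGraph V} {H : SimpleGraph W} {s : Set V} {x : V}

theorem Walk.exists_walk_length_le_of_adj_imp {f : V → W}
    (hf : ∀ ⦃a b⦄, G.Adj a b → f a = f b ∨ H.Adj (f a) (f b)) {u v : V} :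
    ∀ p : G.Walk u v, ∃ q : H.Walk (f u) (f v), q.length ≤ p.length
  | .nil => ⟨.nil, le_rfl⟩
  | .cons h p => by
    obtain ⟨q, hq⟩ := exists_walk_length_le_of_adj_imp hf p
    rcases hf h with heq | hadj
    · exact ⟨q.copy heq.symm rfl, by simp only [length_copy, length_cons]; omega⟩
    · exact ⟨.cons hadj q, by simp only [length_cons]; omega⟩

theorem edist_le_edist_of_adj_imp {f : V → W}
    (hf : ∀ ⦃a b⦄, G.Adj a b → f a = f b ∨ H.Adj (f a) (f b)) (u v : V) :
    H.edist (f u) (f v) ≤ G.edist u v := by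
  by_cases hr : G.Reachable u v
  · obtain ⟨p, hp⟩ := hr.exists_walk_length_eq_edist
    obtain ⟨q, hq⟩ := p.exists_walk_length_le_of_adj_imp hf
    calc H.edist (f u) (f v) ≤ q.length := edist_le q
      _ ≤ p.length := by exact_mod_cast hq
      _ = G.edist u v := hp
  · simp [edist_eq_top_of_not_reachable hr]

theorem Iso.dist_eq (e : G ≃g H) (u v : V) : H.dist (e u) (e v) = G.dist u v := by
  have hle := edist_le_edist_of_adj_imp (G := G) (H := H) (f := e)
    (fun _ _ h => .inr (e.map_adj_iff.mpr h)) u v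
  have hge := edist_le_edist_of_adj_imp (G := H) (H := G) (f := e.symm)
    (fun _ _ h => .inr (e.symm.map_adj_iff.mpr h)) (e u) (e v)
  simp only [RelIso.symm_apply_apply] at hge
  rw [dist, dist, le_antisymm hle hge]

noncomputable def induceInduceIso (s : Set V) (A : Set s) :
    (G.induce s).induce A ≃g G.induce (Subtype.val '' A) where
  toEquiv := Equiv.Set.image Subtype.val A Subtype.val_injective
  map_rel_iff' := Iff.rfl

theorem isIsomSub_induce_iff (hdist : ∀ u v : s, (G.induce s).dist u v = G.dist u v) (A : Set s) :
    IsIsomSub (G.induce s) A ↔ IsIsomSub G (Subtype.val '' A) := by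
  let e := induceInduceIso (G := G) s A
  refine and_congr e.connected_iff ?_
  rw [e.surjective.forall₂]
  refine forall₂_congr fun u v => ?_
  rw [e.dist_eq]
  exact Eq.congr_right (hdist u v)


noncomputable def collapseOutside (s : Set V) (c : s) (v : V) : s :=
  open Classical in if h : v ∈ s then ⟨v, h⟩ else c

theorem collapseOutside_coe (c v : s) : collapseOutside s c v = v := by
  simp [collapseOutside]

section Separation

variable (hsep : ∀ ⦃a b⦄, G.Adj a b → a ∈ s → b ∉ s → a = x)
include hsep

theorem collapseOutside_eq_or_adj (hx : x ∈ s) ⦃a b : V⦄ (h : G.Adj a b) :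
    collapseOutside s ⟨x, hx⟩ a = collapseOutside s ⟨x, hx⟩ b ∨
      (G.induce s).Adj (collapseOutside s ⟨x, hx⟩ a) (collapseOutside s ⟨x, hx⟩ b) := by
  by_cases ha : a ∈ s <;> by_cases hb : b ∈ s <;>
    simp only [collapseOutside, ha, hb, dite_true, dite_false]
  · exact .inr h
  · exact .inl (Subtype.ext (hsep h ha hb))
  · exact .inl (Subtype.ext (hsep h.symm hb ha).symm)
  · exact .inl trivial

theorem dist_induce_eq (hx : x ∈ s) (u v : s) : (G.induce s).dist u v = G.dist u v := by
  have hle := edist_le_edist_of_adj_imp (collapseOutside_eq_or_adj hsep hx) u v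
  have hge := edist_le_edist_of_adj_imp (G := G.induce s) (f := Subtype.val)
    (fun _ _ h => .inr h) u v
  rw [collapseOutside_coe, collapseOutside_coe] at hle
  rw [dist, dist, le_antisymm hle hge]

theorem Walk.mem_support_of_mem_of_notMem {a b : V} (p : G.Walk a b) (ha : a ∈ s)
    (hb : b ∉ s) : x ∈ p.support := by
  induction p with
  | nil => exact absurd ha hb
  | @cons a c b h p ih =>
    by_cases hc : c ∈ s
    · exact List.mem_cons_of_mem _ (ih hc hb)
    · rw [← hsep h ha hc]
      exact Walk.start_mem_support _

theorem subset_of_preconnected_of_notMem {A : Set V} (hxA : x ∉ A)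
    (hA : (G.induce A).Preconnected) {a : V} (haA : a ∈ A) (has : a ∈ s) : A ⊆ s := by
  intro b hbA
  by_contra hbs
  obtain ⟨p⟩ := hA ⟨a, haA⟩ ⟨b, hbA⟩
  have hx := (p.map (Embedding.induce A).toHom).mem_support_of_mem_of_notMem hsep has hbs
  rw [Walk.support_map, List.mem_map] at hx
  obtain ⟨c, -, rfl⟩ := hx
  exact hxA c.2

theorem mem_dpOut_induce_iff (hx : x ∈ s) {n : ℕ} :
    n ∈ dpOut (G.induce s) ⟨x, hx⟩ ↔
      ∃ A ⊆ s, A.Nonempty ∧ x ∉ A ∧ A.ncard = n ∧ IsIsomSub G A := by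
  have hiso := isIsomSub_induce_iff (dist_induce_eq hsep hx)
  constructor
  · rintro ⟨B, hne, hxB, rfl, hB⟩
    refine ⟨Subtype.val '' B, Subtype.coe_image_subset _ _, hne.image _, ?_,
      Set.ncard_image_of_injective _ Subtype.val_injective, (hiso B).mp hB⟩
    rintro ⟨b, hb, hbx⟩
    rw [show b = ⟨x, hx⟩ from Subtype.ext hbx] at hb
    exact hxB hb
  · rintro ⟨A, hAs, ⟨a, haA⟩, hxA, rfl, hA⟩
    have himg : Subtype.val '' (Subtype.val ⁻¹' A : Set s) = A :=
      Set.image_preimage_eq_of_subset (by rwa [Subtype.range_coe])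
    refine ⟨Subtype.val ⁻¹' A, ⟨⟨a, hAs haA⟩, haA⟩, hxA, ?_, by rwa [hiso, himg]⟩
    rw [← Set.ncard_image_of_injective _ Subtype.val_injective, himg]

end Separation

end SimpleGraph

theorem dp_avoiding_cut_vertex_general {V : Type*} (K : SimpleGraph V)
    (sG sH : Set V) (x : V) (hxG : x ∈ sG) (hxH : x ∈ sH)
    (hcap : sG ∩ sH = {x}) (hcup : sG ∪ sH = Set.univ)
    (hedge : ∀ u v : V, K.Adj u v → (u ∈ sG ∧ v ∈ sG) ∨ (u ∈ sH ∧ v ∈ sH)) :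
    dpOut K x =
      dpOut (K.induce sG) ⟨x, hxG⟩ ∪ dpOut (K.induce sH) ⟨x, hxH⟩ := by
  have hsepG : ∀ ⦃a b⦄, K.Adj a b → a ∈ sG → b ∉ sG → a = x := fun a b h ha hb =>
    (hedge a b h).elim (fun h' => absurd h'.2 hb) fun h' => hcap.subset ⟨ha, h'.1⟩
  have hsepH : ∀ ⦃a b⦄, K.Adj a b → a ∈ sH → b ∉ sH → a = x := fun a b h ha hb =>
    (hedge a b h).elim (fun h' => hcap.subset ⟨h'.1, ha⟩) fun h' => absurd h'.2 hb
  ext n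
  rw [Set.mem_union, mem_dpOut_induce_iff hsepG, mem_dpOut_induce_iff hsepH]
  constructor
  · rintro ⟨A, ⟨a, haA⟩, hxA, hn, hA⟩
    rcases hcup.symm.subset (Set.mem_univ a) with haG | haH
    · exact .inl ⟨A, subset_of_preconnected_of_notMem hsepG hxA hA.1.preconnected haA haG,
        ⟨a, haA⟩, hxA, hn, hA⟩
    · exact .inr ⟨A, subset_of_preconnected_of_notMem hsepH hxA hA.1.preconnected haA haH,
        ⟨a, haA⟩, hxA, hn, hA⟩
  · rintro (⟨A, -, hA⟩ | ⟨A, -, hA⟩) <;> exact ⟨A, hA⟩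

/-- Let `K = G +_x H` be the union of two finite simple connected graphs
`G = K[sG]` and `H = K[sH]` whose vertex sets intersect in exactly the
vertex `x`.  Then the set of cardinalities of isometric subgraphs of
`G +_x H` avoiding `x` equals `dp_x(G) ∪ dp_x(H)`. -/
theorem dp_avoiding_cut_vertex {V : Type*} [Fintype V] (K : SimpleGraph V)
    (sG sH : Set V) (x : V) (hxG : x ∈ sG) (hxH : x ∈ sH)
    (hcap : sG ∩ sH = {x}) (hcup : sG ∪ sH = Set.univ)
    (hedge : ∀ u v : V, K.Adj u v → (u ∈ sG ∧ v ∈ sG) ∨ (u ∈ sH ∧ v ∈ sH))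
    (hGconn : (K.induce sG).Connected) (hHconn : (K.induce sH).Connected) :
    dpOut K x =
      dpOut (K.induce sG) ⟨x, hxG⟩ ∪ dpOut (K.induce sH) ⟨x, hxH⟩ :=
  dp_avoiding_cut_vertex_general K sG sH x hxG hxH hcap hcup hedge
end

section
/- Let k ≥ 5 and let t be an integer with ⌊k/2⌋ + 2 < t < k. Then the cycle graph C_k has no isometric subgraph on exactly t vertices; consequently, C_k is not distance preserving for every k ≥ 5. -/
/-!
Suppose `A` is a proper isometric subset of `C_k` with `w ∉ A`. Cutting the cycle at `w` and
numbering its vertices by their clockwise offset `f x = x - w` from `w`, adjacent vertices of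
`A` have offsets differing by one, so `f` does not increase faster than distance within `G[A]`.
Take `a, b ∈ A` with extreme offsets and let `d = f b - f a ≥ |A| - 1`. Then
`d ≤ d_{G[A]}(a, b) = d_{C_k}(a, b) ≤ k - d`, since going around the cycle from `b` to `a` the
other way takes `k - d` steps. Hence `2 |A| ≤ k + 2`, and for `k ≥ 5` this rules out
`|A| = k - 1`.
-/

open SimpleGraph

/-- `G` is distance preserving: it has an isometric subgraph of every order
`1 ≤ i ≤ |V(G)|`. -/
def DistPres {V : Type*} [Fintype V] (G : SimpleGraph V) : Prop :=
  ∀ i : ℕ, 1 ≤ i → i ≤ Fintype.card V →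
    ∃ A : Set V, A.ncard = i ∧ IsIsomSub G A

namespace SimpleGraph

variable {V : Type*} {G : SimpleGraph V} {f : V → ℕ}

theorem Walk.apply_le_apply_add_length (hf : ∀ x y, G.Adj x y → f y ≤ f x + 1) {u v : V}
    (p : G.Walk u v) : f v ≤ f u + p.length := by
  induction p with
  | nil => simp
  | cons h _ ih =>
    have := hf _ _ h
    rw [Walk.length_cons]
    omega

theorem Reachable.apply_le_apply_add_dist (hf : ∀ x y, G.Adj x y → f y ≤ f x + 1) {u v : V}
    (h : G.Reachable u v) : f v ≤ f u + G.dist u v := by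
  obtain ⟨p, hp⟩ := h.exists_walk_length_eq_dist
  exact hp ▸ p.apply_le_apply_add_length hf

variable {k : ℕ}

theorem cycleGraph_dist_le [NeZero k] (u v : Fin k) : (cycleGraph k).dist u v ≤ (v - u).val := by
  suffices h : ∀ n (v : Fin k), (v - u).val = n →
      ∃ p : (cycleGraph k).Walk u v, p.length = n by
    obtain ⟨p, hp⟩ := h _ v rfl
    exact hp ▸ dist_le p
  intro n
  induction n with
  | zero =>
    intro v hv
    obtain rfl : v = u := sub_eq_zero.mp (Fin.ext hv)
    exact ⟨Walk.nil, rfl⟩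
  | succ n ih =>
    intro v hv
    have hk : 2 ≤ k := by have := (v - u).isLt; omega
    have hone : (1 : Fin k).val = 1 := by rw [Fin.val_one', Nat.mod_eq_of_lt hk]
    have hpred : (v - 1 - u).val = n := by
      rw [sub_right_comm, Fin.sub_val_of_le (by rw [Fin.le_def]; omega), hv, hone]
      rfl
    obtain ⟨p, hp⟩ := ih (v - 1) hpred
    have hadj : (cycleGraph k).Adj (v - 1) v := by
      rw [cycleGraph_adj', sub_sub_cancel, hone]
      exact Or.inr rfl
    exact ⟨p.concat hadj, by rw [Walk.length_concat, hp]⟩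

theorem cycleGraph_val_sub_le_of_adj [NeZero k] {x y w : Fin k} (hxy : (cycleGraph k).Adj x y)
    (hx : x ≠ w) : (y - w).val ≤ (x - w).val + 1 := by
  rw [cycleGraph_adj', ← sub_sub_sub_cancel_right x y w, ← sub_sub_sub_cancel_right y x w]
    at hxy
  have hx' : (x - w).val ≠ 0 := by
    rwa [Ne, Fin.val_eq_zero_iff, sub_eq_zero]
  rcases le_or_gt (y - w) (x - w) with hle | hlt
  · rw [Fin.le_def] at hle
    omega
  · rw [Fin.coe_sub_iff_lt.mpr hlt, Fin.coe_sub_iff_le.mpr hlt.le] at hxy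
    rw [Fin.lt_def] at hlt
    omega

end SimpleGraph

theorem IsIsomSub.two_mul_ncard_le_cycleGraph {k : ℕ} {A : Set (Fin k)}
    (hA : IsIsomSub (cycleGraph k) A) (hne : A ≠ Set.univ) : 2 * A.ncard ≤ k + 2 := by
  obtain ⟨w, hw⟩ := (Set.ne_univ_iff_exists_notMem A).mp hne
  have : NeZero k := ⟨by have := w.isLt; omega⟩
  obtain ⟨⟨x₀, hx₀⟩⟩ := hA.1.nonempty
  set f : Fin k → ℕ := fun x => (x - w).val
  have hf_inj : f.Injective := Fin.val_injective.comp sub_left_injective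
  obtain ⟨a, ha, ha_min⟩ := A.exists_min_image f A.toFinite ⟨x₀, hx₀⟩
  obtain ⟨b, hb, hb_max⟩ := A.exists_max_image f A.toFinite ⟨x₀, hx₀⟩
  have hcard : A.ncard ≤ f b + 1 - f a := by
    rw [← Set.ncard_image_of_injective A hf_inj, ← Set.ncard_Icc_nat]
    refine Set.ncard_le_ncard ?_
    rintro _ ⟨x, hx, rfl⟩
    exact ⟨ha_min x hx, hb_max x hx⟩
  have hlower : f b ≤ f a + (cycleGraph k).dist a b := by
    have hstep : ∀ x y : A, ((cycleGraph k).induce A).Adj x y → f y ≤ f x + 1 :=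
      fun x y hxy => cycleGraph_val_sub_le_of_adj hxy (ne_of_mem_of_not_mem x.2 hw)
    have := (hA.1.preconnected ⟨a, ha⟩ ⟨b, hb⟩).apply_le_apply_add_dist
      (f := fun x : A => f x) hstep
    rwa [hA.2] at this
  have hupper : f a < f b → (cycleGraph k).dist a b ≤ k + f a - f b := by
    intro hab
    rw [dist_comm, ← Fin.coe_sub_iff_lt.mpr (Fin.lt_def.mpr hab), sub_sub_sub_cancel_right]
    exact cycleGraph_dist_le b a
  omega

theorem cycle_no_isometric_subgraph_general (k t : ℕ)
    (ht₁ : k / 2 + 2 < t) (ht₂ : t < k) :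
    (¬ ∃ A : Set (Fin k), A.ncard = t ∧ IsIsomSub (cycleGraph k) A) ∧
      ∀ m : ℕ, 5 ≤ m → ¬ DistPres (cycleGraph m) := by
  have ne_univ {n : ℕ} {A : Set (Fin n)} (h : A.ncard < n) : A ≠ Set.univ :=
    ne_of_apply_ne Set.ncard (by rw [Set.ncard_univ, Nat.card_fin]; omega)
  refine ⟨fun ⟨A, hcard, hA⟩ => ?_, fun m hm hm_dp => ?_⟩
  · have := hA.two_mul_ncard_le_cycleGraph (ne_univ (by omega))
    omega
  · obtain ⟨A, hcard, hA⟩ := hm_dp (m - 1) (by omega) (by rw [Fintype.card_fin]; omega)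
    have := hA.two_mul_ncard_le_cycleGraph (ne_univ (by omega))
    omega

/-- Let `k ≥ 5` and let `t` satisfy `⌊k/2⌋ + 2 < t < k`.  Then the cycle
`C_k` has no isometric subgraph on exactly `t` vertices; consequently `C_m`
is not distance preserving for every `m ≥ 5`. -/
theorem cycle_no_isometric_subgraph (k t : ℕ) (hk : 5 ≤ k)
    (ht₁ : k / 2 + 2 < t) (ht₂ : t < k) :
    (¬ ∃ A : Set (Fin k), A.ncard = t ∧ IsIsomSub (cycleGraph k) A) ∧
      ∀ m : ℕ, 5 ≤ m → ¬ DistPres (cycleGraph m) :=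
  cycle_no_isometric_subgraph_general k t ht₁ ht₂
end
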